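/- With S as above and S′ = S ∪ {(0:0:1)}, the projective linear map g induced by the matrix with rows (0,-1,0),(1,0,0),(0,0,1) satisfies g(conj(S′)) = S′; hence the field of moduli of S′ is ℝ. -/

import Mathlib

open Projectivization
open scoped LinearAlgebra.Projectivization

noncomputable section

abbrev P2 := ℙ ℂ (Fin 3 → ℂ)

/-- Coordinatewise complex conjugation on ℙ²(ℂ). -/
def conjP (p : P2) : P2 :=
  Projectivization.mk ℂ (fun i => starRingEnd ℂ (p.rep i)) (by
    intro h
    apply p.rep_nonzero
    funext i
    have := congrFun h i
    simpa using this)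

/-- The four points F = {(1:0:1), (-1:0:1), (0:1:1), (0:-1:1)}. -/
def F : Set P2 :=
  {Projectivization.mk ℂ ![1, 0, 1] (fun h => by have := congrFun h 0; simp at this),
   Projectivization.mk ℂ ![-1, 0, 1] (fun h => by have := congrFun h 2; simp at this),
   Projectivization.mk ℂ ![0, 1, 1] (fun h => by have := congrFun h 1; simp at this),
   Projectivization.mk ℂ ![0, -1, 1] (fun h => by have := congrFun h 2; simp at this)}

/-- The set S = {(aᵢ:1:0), (1:-conj(aᵢ):0) : i} ∪ F. -/
def Spts (m : ℕ) (a : Fin m → ℂ) : Set P2 :=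
  (⋃ i : Fin m,
    {Projectivization.mk ℂ ![a i, 1, 0] (fun h => by have := congrFun h 1; simp at this),
     Projectivization.mk ℂ ![1, -(starRingEnd ℂ (a i)), 0]
       (fun h => by have := congrFun h 0; simp at this)}) ∪ F

/-- The projective linear map g induced by the matrix with rows (0,-1,0), (1,0,0), (0,0,1). -/
def gEquiv : (Fin 3 → ℂ) ≃ₗ[ℂ] (Fin 3 → ℂ) where
  toFun v := ![-(v 1), v 0, v 2]
  invFun v := ![v 1, -(v 0), v 2]
  map_add' x y := by funext i; fin_cases i <;> simp <;> ring
  map_smul' c x := by funext i; fin_cases i <;> simp <;> ring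
  left_inv v := by funext i; fin_cases i <;> simp <;> ring
  right_inv v := by funext i; fin_cases i <;> simp <;> ring

def gP : P2 → P2 := Projectivization.map gEquiv.toLinearMap gEquiv.injective

/-- S′ = S ∪ {(0:0:1)}. -/
def Spts' (m : ℕ) (a : Fin m → ℂ) : Set P2 :=
  Spts m a ∪
    {Projectivization.mk ℂ ![0, 0, 1] (fun h => by have := congrFun h 2; simp at this)}

/-! `g ∘ conj` sends `(x:y:z)` to `(-ȳ : x̄ : z̄)`. It therefore swaps `(aᵢ:1:0)` and
`(1:-āᵢ:0)` (the first up to the scalar `-1`), permutes the four points of `F` cyclically and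
fixes `(0:0:1)`, so it maps `S′` onto itself. -/

lemma conjP_mk (v : Fin 3 → ℂ) (hv : v ≠ 0) :
    conjP (mk ℂ v hv) = mk ℂ (star v) (star_ne_zero.mpr hv) := by
  obtain ⟨c, hc⟩ := exists_smul_eq_mk_rep ℂ v hv
  rw [conjP, mk_eq_mk_iff]
  refine ⟨Units.map (starRingEnd ℂ).toMonoidHom c, funext fun i => ?_⟩
  simp [← hc, Units.smul_def]

@[simp]
lemma gP_conjP_mk (v : Fin 3 → ℂ) (hv : v ≠ 0) :
    gP (conjP (mk ℂ v hv)) =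
      mk ℂ ![-starRingEnd ℂ (v 1), starRingEnd ℂ (v 0), starRingEnd ℂ (v 2)]
        (show _ ≠ 0 from gEquiv.map_ne_zero_iff.mpr (star_ne_zero.mpr hv)) := by
  rw [conjP_mk, gP, map_mk]
  rfl

lemma image_gP_conjP_pair_line_at_infinity (x : ℂ) (hA : (![x, 1, 0] : Fin 3 → ℂ) ≠ 0)
    (hB : (![1, -starRingEnd ℂ x, 0] : Fin 3 → ℂ) ≠ 0) :
    (fun p => gP (conjP p)) '' {mk ℂ ![x, 1, 0] hA, mk ℂ ![1, -starRingEnd ℂ x, 0] hB} =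
      {mk ℂ ![x, 1, 0] hA, mk ℂ ![1, -starRingEnd ℂ x, 0] hB} := by
  have hAB : gP (conjP (mk ℂ ![x, 1, 0] hA)) = mk ℂ ![1, -starRingEnd ℂ x, 0] hB := by
    rw [gP_conjP_mk, mk_eq_mk_iff']
    exact ⟨-1, by ext i; fin_cases i <;> simp⟩
  rw [Set.image_pair, hAB, Set.pair_comm]
  simp

lemma image_gP_conjP_F : (fun p => gP (conjP p)) '' F = F := by
  simp only [F, Set.image_insert_eq, Set.image_singleton, gP_conjP_mk, Matrix.cons_val_zero,
    Matrix.cons_val_one, Matrix.cons_val, map_zero, map_one, map_neg, neg_zero, neg_neg]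
  ext p
  simp only [Set.mem_insert_iff, Set.mem_singleton_iff]
  tauto

theorem gP_image_conjP_image_Spts' (m : ℕ) (a : Fin m → ℂ) :
    gP '' (conjP '' Spts' m a) = Spts' m a := by
  simp only [Set.image_image, Spts', Spts, Set.image_union, Set.image_iUnion,
    image_gP_conjP_pair_line_at_infinity, image_gP_conjP_F, Set.image_singleton, gP_conjP_mk]
  simp

theorem field_of_moduli_S'_is_R_general (m : ℕ) (a : Fin m → ℂ) :
    gP '' (conjP '' Spts' m a) = Spts' m a ∧
    ∃ T : (Fin 3 → ℂ) ≃ₗ[ℂ] (Fin 3 → ℂ),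
      Projectivization.map T.toLinearMap T.injective '' (conjP '' Spts' m a) = Spts' m a :=
  ⟨gP_image_conjP_image_Spts' m a, gEquiv, gP_image_conjP_image_Spts' m a⟩

/-- for a₁,…,a_m ∈ ℂ* with |aᵢ| ≠ 1, the projective linear map g with matrix
rows (0,-1,0),(1,0,0),(0,0,1) satisfies g(conj(S′)) = S′ for S′ = S ∪ {(0:0:1)},
S = {(aᵢ:1:0), (1:-conj(aᵢ):0)} ∪ {(±1:0:1),(0:±1:1)}; consequently S′ is projectively
equivalent to its complex conjugate, i.e. the field of moduli of S′ is ℝ. -/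
theorem field_of_moduli_S'_is_R (m : ℕ) (a : Fin m → ℂ)
    (ha0 : ∀ i, a i ≠ 0) (ha1 : ∀ i, ‖a i‖ ≠ 1) :
    gP '' (conjP '' Spts' m a) = Spts' m a ∧
    ∃ T : (Fin 3 → ℂ) ≃ₗ[ℂ] (Fin 3 → ℂ),
      Projectivization.map T.toLinearMap T.injective '' (conjP '' Spts' m a) = Spts' m a :=
  field_of_moduli_S'_is_R_general m a

end
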